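/- If the weights are non-increasing, W_1 ≥ W_2 ≥ … ≥ W_J > 0, then log C_W(m,J) = log(Σ_{j=1}^{J−m} W_j) + log(Σ_{j=J−m+1}^{J} 1/W_j), and the first term is bounded above by log(J−m) + log W_1. -/

import Mathlib

/-!
For non-increasing weights both factors of `(∑_{Aᶜ} W) (∑_A W⁻¹)` are maximised by the same
set `A₀`, the last `m` indices: an element of `A \ A₀` precedes every element of `A₀ \ A`, and the
two differences have the same size, so passing from `A` to `A₀` can only increase either sum.
Hence `C_W(m,J)` is the product of the two sums at `A₀`, and the head sum is at most
`(J - m) W₁`.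
-/

open Finset

noncomputable def CW (J m : ℕ) (hm : m ≤ J) (W : Fin J → ℝ) : ℝ :=
  ((Finset.univ : Finset (Fin J)).powersetCard m).sup'
    (Finset.powersetCard_nonempty.mpr (by simpa using hm))
    fun A => (∑ j ∈ Aᶜ, W j) * ∑ k ∈ A, (W k)⁻¹

theorem Finset.sum_le_sum_of_card_eq_of_forall_sdiff_le {ι β : Type*} [DecidableEq ι]
    [AddCommMonoid β] [LinearOrder β] [IsOrderedAddMonoid β] {f : ι → β} {S T : Finset ι}
    (hcard : #S = #T) (h : ∀ x ∈ S \ T, ∀ y ∈ T \ S, f x ≤ f y) :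
    ∑ i ∈ S, f i ≤ ∑ i ∈ T, f i := by
  rw [← sum_inter_add_sum_sdiff S T, ← sum_inter_add_sum_sdiff T S, inter_comm T S]
  refine add_le_add_right ?_ (∑ i ∈ S ∩ T, f i)
  obtain hempty | ⟨x₀, hx₀, hmax⟩ :=
    (S \ T).eq_empty_or_nonempty.imp id fun hne => exists_max_image _ f hne
  · have : T \ S = ∅ := by rw [← card_eq_zero, ← card_sdiff_comm hcard, hempty, card_empty]
    simp [hempty, this]
  · calc ∑ i ∈ S \ T, f i ≤ #(S \ T) • f x₀ := sum_le_card_nsmul _ _ _ hmax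
      _ = #(T \ S) • f x₀ := by rw [card_sdiff_comm hcard]
      _ ≤ ∑ i ∈ T \ S, f i := card_nsmul_le_sum _ _ _ fun y hy => h x₀ hx₀ y hy

section LastIndices

variable {J m : ℕ}

theorem compl_filter_sub_le_val :
    ({j | J - m ≤ (j : ℕ)} : Finset (Fin J))ᶜ = ({j | (j : ℕ) < J - m} : Finset (Fin J)) := by
  simp only [compl_filter, not_le]

theorem card_filter_sub_le_val (hm : m ≤ J) : #{j : Fin J | J - m ≤ (j : ℕ)} = m := by
  have h := card_add_card_compl ({j | J - m ≤ (j : ℕ)} : Finset (Fin J))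
  rw [compl_filter_sub_le_val, Fin.card_filter_val_lt, Fintype.card_fin] at h
  omega

theorem CW_eq_of_antitone (hm : m ≤ J) {W : Fin J → ℝ} (hpos : ∀ j, 0 < W j)
    (hanti : Antitone W) :
    CW J m hm W =
      (∑ j ∈ {j : Fin J | (j : ℕ) < J - m}, W j) *
        ∑ j ∈ {j : Fin J | J - m ≤ (j : ℕ)}, (W j)⁻¹ := by
  have hinv : Monotone fun j => (W j)⁻¹ := fun a b hab => inv_anti₀ (hpos b) (hanti hab)
  refine le_antisymm (sup'_le _ _ fun A hA => ?_) ?_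
  · have hA : #A = m := mem_powersetCard_univ.mp hA
    rw [← compl_filter_sub_le_val]
    refine mul_le_mul ?_ ?_ (sum_nonneg fun j _ => (inv_pos.mpr (hpos j)).le)
      (sum_nonneg fun j _ => (hpos j).le)
    · refine sum_le_sum_of_card_eq_of_forall_sdiff_le
        (by rw [card_compl, card_compl, hA, card_filter_sub_le_val hm]) fun x hx y hy => ?_
      simp only [mem_sdiff, mem_compl, mem_filter, mem_univ, true_and] at hx hy
      exact hanti (Fin.le_def.mpr (by omega))
    · refine sum_le_sum_of_card_eq_of_forall_sdiff_le (by rw [hA, card_filter_sub_le_val hm])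
        fun x hx y hy => ?_
      simp only [mem_sdiff, mem_filter, mem_univ, true_and] at hx hy
      exact hinv (Fin.le_def.mpr (by omega))
  · rw [← compl_filter_sub_le_val]
    exact le_sup' (fun A => (∑ j ∈ Aᶜ, W j) * ∑ k ∈ A, (W k)⁻¹)
      (mem_powersetCard_univ.mpr (card_filter_sub_le_val hm))

end LastIndices

theorem stmt6 (J m : ℕ) [NeZero J] (hm : 0 < m) (hmJ : m < J) (W : Fin J → ℝ)
    (hpos : ∀ j, 0 < W j) (hanti : Antitone W) :
    Real.log (CW J m hmJ.le W) =
        Real.log (∑ j ∈ Finset.univ.filter fun j : Fin J => (j : ℕ) < J - m, W j) +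
          Real.log (∑ j ∈ Finset.univ.filter fun j : Fin J => J - m ≤ (j : ℕ), (W j)⁻¹) ∧
      Real.log (∑ j ∈ Finset.univ.filter fun j : Fin J => (j : ℕ) < J - m, W j) ≤
        Real.log ((J : ℝ) - (m : ℝ)) + Real.log (W 0) := by
  have hhead : 0 < ∑ j ∈ {j : Fin J | (j : ℕ) < J - m}, W j :=
    sum_pos (fun j _ => hpos j)
      ⟨0, by simp only [mem_filter, mem_univ, Fin.coe_ofNat_eq_mod, Nat.zero_mod, true_and]; omega⟩
  have htail : 0 < ∑ j ∈ {j : Fin J | J - m ≤ (j : ℕ)}, (W j)⁻¹ :=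
    sum_pos (fun j _ => inv_pos.mpr (hpos j))
      ⟨⟨J - 1, by omega⟩, by simp only [mem_filter, mem_univ, true_and]; omega⟩
  have hJm : (0 : ℝ) < J - m := sub_pos.mpr (by exact_mod_cast hmJ)
  refine ⟨by rw [CW_eq_of_antitone hmJ.le hpos hanti, Real.log_mul hhead.ne' htail.ne'], ?_⟩
  rw [← Real.log_mul hJm.ne' (hpos 0).ne']
  refine Real.log_le_log hhead ?_
  calc ∑ j ∈ {j : Fin J | (j : ℕ) < J - m}, W j
      ≤ #{j : Fin J | (j : ℕ) < J - m} • W 0 :=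
        sum_le_card_nsmul _ _ _ fun j _ => hanti (Fin.zero_le j)
    _ = (J - m : ℝ) * W 0 := by
        rw [Fin.card_filter_val_lt, nsmul_eq_mul, min_eq_right (Nat.sub_le J m),
          Nat.cast_sub hmJ.le]
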